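/- There exists a constant C > 0 such that the following holds: for every integer n ≥ 8, every sequence 𝒢 = (G_1, G_2, …) of nonsplit communication graphs on n nodes, and every t ≥ 1, there exists a set A ⊆ [n] of at most C·ln n nodes such that A at time t covers the set [n] of all nodes at time t + ⌈log₂ ln n⌉. -/
import Mathlib


/-- `prodRange G a k` is the product graph `G_a ∘ G_{a+1} ∘ ⋯ ∘ G_{a+k-1}`;
the empty product (`k = 0`) has exactly the self-loops. -/
def prodRange {n : ℕ} (G : ℕ → Fin n → Fin n → Prop) (a : ℕ) : ℕ → Fin n → Fin n → Prop
  | 0, i, j => i = j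
  | k + 1, i, j => ∃ m, prodRange G a k i m ∧ G (a + k) m j

open scoped Classical

/-- In a nonsplit graph, any finite set `S` can be covered by a set of about `|S|/2` nodes. -/
lemma pairing_cover {n : ℕ} (G₀ : Fin n → Fin n → Prop)
    (hns : ∀ i j, ∃ k, G₀ k i ∧ G₀ k j) :
    ∀ S : Finset (Fin n), ∃ T : Finset (Fin n),
      T.card * 2 ≤ S.card + 1 ∧ ∀ j ∈ S, ∃ m ∈ T, G₀ m j := by
  intro S
  induction S using Finset.strongInductionOn with
  | _ S ih =>
    rcases eq_or_ne S ∅ with rfl | hne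
    · exact ⟨∅, by simp, by simp⟩
    obtain ⟨x, hx⟩ := Finset.nonempty_iff_ne_empty.mpr hne
    by_cases h1 : S.card ≤ 1
    · have hS : S = {x} := by
        apply Finset.eq_singleton_iff_unique_mem.mpr
        refine ⟨hx, fun y hy => ?_⟩
        have := Finset.card_le_one.mp h1 y hy x hx
        exact this
      obtain ⟨m, hm, _⟩ := hns x x
      refine ⟨{m}, by rw [hS]; simp, ?_⟩
      intro j hj
      rw [hS, Finset.mem_singleton] at hj
      exact ⟨m, Finset.mem_singleton_self m, hj ▸ hm⟩
    · have h2' : 1 < S.card := by omega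
      obtain ⟨a, ha, b, hb, hab⟩ := Finset.one_lt_card.mp h2'
      obtain ⟨m, hma, hmb⟩ := hns a b
      have habS : ({a, b} : Finset (Fin n)) ⊆ S := by
        intro z hz
        simp only [Finset.mem_insert, Finset.mem_singleton] at hz
        rcases hz with rfl | rfl <;> assumption
      have hsub : S \ {a, b} ⊂ S := Finset.sdiff_ssubset habS ⟨a, by simp⟩
      obtain ⟨T', hT'card, hT'cov⟩ := ih _ hsub
      have hcard2 : ({a, b} : Finset (Fin n)).card = 2 := Finset.card_pair hab
      have hsdcard : (S \ {a, b}).card = S.card - 2 := by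
        rw [Finset.card_sdiff_of_subset habS, hcard2]
      refine ⟨insert m T', ?_, ?_⟩
      · have := Finset.card_insert_le m T'
        have h2 : 2 ≤ S.card := by omega
        omega
      · intro j hj
        by_cases hja : j = a
        · exact ⟨m, Finset.mem_insert_self m T', hja ▸ hma⟩
        by_cases hjb : j = b
        · exact ⟨m, Finset.mem_insert_self m T', hjb ▸ hmb⟩
        · obtain ⟨m', hm', hgm'⟩ := hT'cov j (by
            simp [Finset.mem_sdiff, hj, hja, hjb])
          exact ⟨m', Finset.mem_insert_of_mem hm', hgm'⟩

/-- The product of `k` nonsplit graphs is `2^k`-nonsplit. -/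
lemma prodRange_common_inneighbor {n : ℕ} (G : ℕ → Fin n → Fin n → Prop) (hn0 : 0 < n)
    (hns : ∀ t i j, ∃ k, G t k i ∧ G t k j) :
    ∀ (k a : ℕ) (S : Finset (Fin n)), S.card ≤ 2 ^ k →
      ∃ v, ∀ j ∈ S, prodRange G a k v j := by
  intro k
  induction k with
  | zero =>
    intro a S hS
    simp only [pow_zero] at hS
    rcases eq_or_ne S ∅ with rfl | hne
    · exact ⟨⟨0, hn0⟩, by simp⟩
    obtain ⟨x, hx⟩ := Finset.nonempty_iff_ne_empty.mpr hne
    refine ⟨x, fun j hj => ?_⟩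
    have : j = x := Finset.card_le_one.mp hS j hj x hx
    show x = j
    exact this.symm
  | succ k ih =>
    intro a S hS
    obtain ⟨T, hTcard, hTcov⟩ := pairing_cover (G (a + k)) (hns (a + k)) S
    have hT : T.card ≤ 2 ^ k := by
      have : (2:ℕ) ^ (k+1) = 2 ^ k * 2 := by ring
      omega
    obtain ⟨v, hv⟩ := ih a T hT
    refine ⟨v, fun j hj => ?_⟩
    obtain ⟨m, hm, hgm⟩ := hTcov j hj
    exact ⟨m, hv m hm, hgm⟩

/-- Counting lemma: if every `ℓ`-set has a common in-neighbor and `n ≤ 16^ℓ`, then for any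
large set `R` some node covers a constant fraction of `R`. -/
lemma exists_big_cover {n ℓ : ℕ} (hn0 : 0 < n) (hℓ : 2 ≤ ℓ) (hn : n ≤ 16 ^ ℓ)
    (H : Fin n → Fin n → Prop)
    (hH : ∀ S : Finset (Fin n), S.card ≤ ℓ → ∃ v, ∀ j ∈ S, H v j)
    (R : Finset (Fin n)) (hR : 2 * ℓ < R.card) :
    ∃ v, R.card + 1 - ℓ ≤ 16 * (R.filter fun j => H v j).card := by
  set P := R.powersetCard ℓ with hP
  have hPcard : P.card = R.card.choose ℓ := Finset.card_powersetCard ℓ R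
  set f : Finset (Fin n) → Fin n :=
    fun S => if h : ∃ v, ∀ j ∈ S, H v j then h.choose else ⟨0, hn0⟩ with hf
  have hkey : ∀ S ∈ P, S ⊆ R.filter fun j => H (f S) j := by
    intro S hSP
    rw [Finset.mem_powersetCard] at hSP
    obtain ⟨hSR, hScard⟩ := hSP
    have hex : ∃ v, ∀ j ∈ S, H v j := hH S (le_of_eq hScard)
    intro j hj
    rw [Finset.mem_filter]
    refine ⟨hSR hj, ?_⟩
    have : f S = hex.choose := dif_pos hex
    rw [this]
    exact hex.choose_spec j hj
  -- pigeonhole over fibers of f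
  have hsum : P.card = ∑ v : Fin n, (P.filter fun S => f S = v).card :=
    Finset.card_eq_sum_card_fiberwise (fun S _ => Finset.mem_univ (f S))
  haveI : Nonempty (Fin n) := ⟨⟨0, hn0⟩⟩
  have hex : ∃ v ∈ Finset.univ, P.card ≤ n * (P.filter fun S => f S = v).card := by
    apply Finset.exists_le_of_sum_le Finset.univ_nonempty
    have h1 : ∑ _v : Fin n, P.card = n * P.card := by
      rw [Finset.sum_const, Finset.card_univ, Fintype.card_fin, smul_eq_mul]
    have h2 : ∑ v : Fin n, n * (P.filter fun S => f S = v).card = n * P.card := by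
      rw [← Finset.mul_sum, ← hsum]
    rw [h1, h2]
  obtain ⟨v, _, hv⟩ := hex
  refine ⟨v, ?_⟩
  set d := (R.filter fun j => H v j).card with hd
  have hfib : (P.filter fun S => f S = v) ⊆ (R.filter fun j => H v j).powersetCard ℓ := by
    intro S hS
    rw [Finset.mem_filter] at hS
    obtain ⟨hSP, hfS⟩ := hS
    rw [Finset.mem_powersetCard]
    constructor
    · have := hkey S hSP
      rwa [hfS] at this
    · exact (Finset.mem_powersetCard.mp hSP).2
  have hfibcard : (P.filter fun S => f S = v).card ≤ d.choose ℓ := by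
    have := Finset.card_le_card hfib
    rwa [Finset.card_powersetCard] at this
  have hchoose : R.card.choose ℓ ≤ n * d.choose ℓ := by
    calc R.card.choose ℓ = P.card := hPcard.symm
      _ ≤ n * (P.filter fun S => f S = v).card := hv
      _ ≤ n * d.choose ℓ := Nat.mul_le_mul_left n hfibcard
  -- numeric chain
  have hpow : (R.card + 1 - ℓ) ^ ℓ ≤ (16 * d) ^ ℓ := by
    calc (R.card + 1 - ℓ) ^ ℓ ≤ R.card.descFactorial ℓ :=
          Nat.pow_sub_le_descFactorial R.card ℓ
      _ = (Nat.factorial ℓ) * R.card.choose ℓ := Nat.descFactorial_eq_factorial_mul_choose _ _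
      _ ≤ (Nat.factorial ℓ) * (n * d.choose ℓ) := Nat.mul_le_mul_left _ hchoose
      _ = n * ((Nat.factorial ℓ) * d.choose ℓ) := by ring
      _ = n * d.descFactorial ℓ := by rw [Nat.descFactorial_eq_factorial_mul_choose]
      _ ≤ n * d ^ ℓ := Nat.mul_le_mul_left n (Nat.descFactorial_le_pow d ℓ)
      _ ≤ 16 ^ ℓ * d ^ ℓ := Nat.mul_le_mul_right _ hn
      _ = (16 * d) ^ ℓ := (mul_pow 16 d ℓ).symm
  exact (Nat.pow_le_pow_iff_left (by omega)).mp hpow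

/-- Greedy covering: if every `ℓ`-set has a common in-neighbor and `n ≤ 16^ℓ`, any set `R`
can be covered by `2 + 32 ln |R|` nodes. -/
lemma greedy_cover {n ℓ : ℕ} (hn0 : 0 < n) (hℓ : 2 ≤ ℓ) (hn : n ≤ 16 ^ ℓ)
    (H : Fin n → Fin n → Prop)
    (hH : ∀ S : Finset (Fin n), S.card ≤ ℓ → ∃ v, ∀ j ∈ S, H v j) :
    ∀ R : Finset (Fin n), ∃ A : Finset (Fin n),
      (A.card : ℝ) ≤ 2 + 32 * Real.log R.card ∧ ∀ j ∈ R, ∃ i ∈ A, H i j := by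
  intro R
  induction R using Finset.strongInductionOn with
  | _ R ih =>
    by_cases hsmall : R.card ≤ 2 * ℓ
    · -- small case: cover with at most two common in-neighbors
      by_cases h1 : R.card ≤ ℓ
      · obtain ⟨v, hv⟩ := hH R h1
        refine ⟨{v}, ?_, fun j hj => ⟨v, Finset.mem_singleton_self v, hv j hj⟩⟩
        have : (0:ℝ) ≤ 32 * Real.log R.card := by
          rcases Nat.eq_zero_or_pos R.card with h | h
          · simp [h]
          · have : (1:ℝ) ≤ R.card := by exact_mod_cast h
            have := Real.log_nonneg this
            linarith
        simp only [Finset.card_singleton]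
        push_cast
        linarith
      · push_neg at h1
        obtain ⟨S, hSR, hScard⟩ := Finset.exists_subset_card_eq (le_of_lt h1)
        obtain ⟨v₁, hv₁⟩ := hH S (le_of_eq hScard)
        have hRS : (R \ S).card ≤ ℓ := by
          rw [Finset.card_sdiff_of_subset hSR]
          omega
        obtain ⟨v₂, hv₂⟩ := hH (R \ S) hRS
        refine ⟨{v₁, v₂}, ?_, ?_⟩
        · have hcard : ({v₁, v₂} : Finset (Fin n)).card ≤ 2 :=
            (Finset.card_insert_le _ _).trans (by simp)
          have h1' : (1:ℝ) ≤ R.card := by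
            have : 1 ≤ R.card := by omega
            exact_mod_cast this
          have := Real.log_nonneg h1'
          have : (({v₁, v₂} : Finset (Fin n)).card : ℝ) ≤ 2 := by exact_mod_cast hcard
          linarith [Real.log_nonneg h1']
        · intro j hj
          by_cases hjS : j ∈ S
          · exact ⟨v₁, by simp, hv₁ j hjS⟩
          · exact ⟨v₂, by simp, hv₂ j (Finset.mem_sdiff.mpr ⟨hj, hjS⟩)⟩
    · -- large case: peel off a big chunk
      push_neg at hsmall
      obtain ⟨v, hv⟩ := exists_big_cover hn0 hℓ hn H hH R hsmall
      set D := R.filter fun j => H v j with hD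
      set d := D.card with hd
      have hdR : D ⊆ R := Finset.filter_subset _ _
      have hd1 : 1 ≤ d := by omega
      have h32 : R.card ≤ 32 * d := by omega
      have hss : R \ D ⊂ R := Finset.sdiff_ssubset hdR (Finset.card_pos.mp (by omega))
      obtain ⟨A', hA'card, hA'cov⟩ := ih _ hss
      refine ⟨insert v A', ?_, ?_⟩
      · have hins : ((insert v A').card : ℝ) ≤ A'.card + 1 := by
          have := Finset.card_insert_le v A'
          exact_mod_cast this
        set r : ℕ := R.card with hr
        set r' : ℕ := (R \ D).card with hr'
        have hr'eq : r' = r - d := by rw [hr', Finset.card_sdiff_of_subset hdR]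
        have hrpos : 5 ≤ r := by omega
        have hfrac : (r' : ℝ) ≤ (31 / 32 : ℝ) * r := by
          have hnat : 32 * r' ≤ 31 * r := by omega
          have hre : (32:ℝ) * r' ≤ 31 * r := by exact_mod_cast hnat
          linarith
        have hq : (1:ℝ) ≤ (31:ℝ)/32 * r := by
          have : (5:ℝ) ≤ r := by exact_mod_cast hrpos
          nlinarith
        have hlogle : Real.log r' ≤ Real.log ((31/32 : ℝ) * r) := by
          rcases Nat.eq_zero_or_pos r' with h0 | hpos
          · rw [h0]
            push_cast
            rw [Real.log_zero]
            exact Real.log_nonneg hq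
          · apply Real.log_le_log (by exact_mod_cast hpos) hfrac
        have hlogdiff : Real.log ((31/32 : ℝ) * r) + 1/32 ≤ Real.log r := by
          have hrpos' : (0:ℝ) < r := by
            have : (5:ℝ) ≤ r := by exact_mod_cast hrpos
            linarith
          rw [Real.log_mul (by norm_num) (ne_of_gt hrpos')]
          have : Real.log ((31:ℝ)/32) ≤ 31/32 - 1 :=
            Real.log_le_sub_one_of_pos (by norm_num)
          linarith
        calc ((insert v A').card : ℝ) ≤ A'.card + 1 := hins
          _ ≤ (2 + 32 * Real.log r') + 1 := by linarith [hA'card]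
          _ ≤ 2 + 32 * (Real.log ((31/32:ℝ) * r)) + 1 := by linarith
          _ ≤ 2 + 32 * Real.log r := by linarith
      · intro j hj
        by_cases hjD : j ∈ D
        · exact ⟨v, Finset.mem_insert_self v A', (Finset.mem_filter.mp hjD).2⟩
        · obtain ⟨i, hi, hHi⟩ := hA'cov j (Finset.mem_sdiff.mpr ⟨hj, hjD⟩)
          exact ⟨i, Finset.mem_insert_of_mem hi, hHi⟩

/-- There is a constant `C > 0` such that for every `n ≥ 8`, every sequence of nonsplit
communication graphs on `n` nodes, and every time `t ≥ 1`, there is a set `A` of at most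
`C · ln n` nodes that at time `t` covers all nodes at time `t + ⌈log₂ ln n⌉`. -/
theorem cover_at_depth_loglog :
    ∃ C : ℝ, 0 < C ∧
      ∀ n : ℕ, 8 ≤ n →
        ∀ G : ℕ → Fin n → Fin n → Prop,
          (∀ t i, G t i i) →
          (∀ t i j, ∃ k, G t k i ∧ G t k j) →
          ∀ t : ℕ, 1 ≤ t →
            ∃ A : Finset (Fin n), (A.card : ℝ) ≤ C * Real.log n ∧
              ∀ j : Fin n, ∃ i ∈ A, prodRange G t ⌈Real.logb 2 (Real.log n)⌉₊ i j := by
  refine ⟨100, by norm_num, ?_⟩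
  intro n hn8 G hloop hns t ht
  have hn0 : 0 < n := by omega
  have hlog2 : (0.6931471803 : ℝ) < Real.log 2 := Real.log_two_gt_d9
  have hlogn2 : (2:ℝ) ≤ Real.log n := by
    have h8 : (8:ℝ) ≤ n := by exact_mod_cast hn8
    have : Real.log 8 ≤ Real.log n := Real.log_le_log (by norm_num) h8
    have h8eq : Real.log 8 = 3 * Real.log 2 := by
      rw [show (8:ℝ) = 2 ^ 3 by norm_num, Real.log_pow]
      push_cast; ring
    linarith [h8eq ▸ this]
  have hlognpos : (0:ℝ) < Real.log n := by linarith
  set ℓ : ℕ := ⌊Real.log n⌋₊ with hℓdef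
  have hℓ2 : 2 ≤ ℓ := Nat.le_floor (by exact_mod_cast hlogn2)
  have hℓup : (ℓ : ℝ) ≤ Real.log n := Nat.floor_le (le_of_lt hlognpos)
  have hℓlow : Real.log n < ℓ + 1 := Nat.lt_floor_add_one _
  set k : ℕ := ⌈Real.logb 2 (Real.log n)⌉₊ with hkdef
  -- ℓ ≤ 2^k
  have hk : ℓ ≤ 2 ^ k := by
    have h1 : Real.log n = (2:ℝ) ^ (Real.logb 2 (Real.log n)) :=
      (Real.rpow_logb (by norm_num) (by norm_num) hlognpos).symm
    have h2 : (2:ℝ) ^ (Real.logb 2 (Real.log n)) ≤ (2:ℝ) ^ (k : ℝ) :=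
      Real.rpow_le_rpow_of_exponent_le (by norm_num) (Nat.le_ceil _)
    have h3 : (2:ℝ) ^ (k : ℝ) = ((2 ^ k : ℕ) : ℝ) := by
      rw [Real.rpow_natCast]; push_cast; ring
    have : (ℓ : ℝ) ≤ ((2 ^ k : ℕ) : ℝ) := by
      calc (ℓ : ℝ) ≤ Real.log n := hℓup
        _ ≤ (2:ℝ) ^ (k:ℝ) := h1 ▸ h2
        _ = ((2 ^ k : ℕ) : ℝ) := h3
    exact_mod_cast this
  -- n ≤ 16^ℓ
  have hn16 : n ≤ 16 ^ ℓ := by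
    have hlog16 : Real.log 16 = 4 * Real.log 2 := by
      rw [show (16:ℝ) = 2 ^ 4 by norm_num, Real.log_pow]
      push_cast; ring
    have hℓ2' : (2:ℝ) ≤ ℓ := by exact_mod_cast hℓ2
    have hineq : Real.log n ≤ ℓ * Real.log 16 := by
      rw [hlog16]
      nlinarith [hℓlow, hlog2, hℓ2']
    have h16pos : (0:ℝ) < (16:ℝ) ^ ℓ := by positivity
    have : (n:ℝ) ≤ (16:ℝ) ^ ℓ := by
      have h1 : (n:ℝ) = Real.exp (Real.log n) := (Real.exp_log (by exact_mod_cast hn0)).symm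
      have h2 : (16:ℝ) ^ ℓ = Real.exp (ℓ * Real.log 16) := by
        rw [← Real.log_pow, Real.exp_log h16pos]
      rw [h1, h2]
      exact Real.exp_le_exp.mpr hineq
    have : (n:ℝ) ≤ ((16 ^ ℓ : ℕ) : ℝ) := by push_cast; linarith [this]
    exact_mod_cast this
  -- the ℓ-cover property of the product graph
  have hH : ∀ S : Finset (Fin n), S.card ≤ ℓ → ∃ v, ∀ j ∈ S, prodRange G t k v j := by
    intro S hS
    exact prodRange_common_inneighbor G hn0 hns k t S (hS.trans hk)
  obtain ⟨A, hAcard, hAcov⟩ := greedy_cover hn0 hℓ2 hn16 _ hH Finset.univ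
  refine ⟨A, ?_, fun j => hAcov j (Finset.mem_univ j)⟩
  have hcardu : ((Finset.univ : Finset (Fin n)).card : ℝ) = n := by
    rw [Finset.card_univ, Fintype.card_fin]
  rw [hcardu] at hAcard
  calc (A.card : ℝ) ≤ 2 + 32 * Real.log n := hAcard
    _ ≤ 100 * Real.log n := by linarith
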